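/- Exact depth formula under contraction (numerical form): let d_min be the maximal number of nonzero effective summands in decompositions of a divisor class Δ_min on X_min, and suppose Δ on X equals f*Δ_min + Σ_j (α_j − β_j) E_j with α_j − β_j ≥ 0, where E₁,...,E_m are distinct irreducible exceptional curves generating a direct summand Z^m of Pic(X) complementary to f*Pic(X_min). Then the maximal number of nonzero effective irreducible summands in decompositions of Δ equals d_min + Σ_j (α_j − β_j). -/
import Mathlib


/-- Exact depth formula under contraction, numerical form.  Model
`Pic(X) ≅ f^*Pic(X_min) ⊕ ℤ^m`, with `A` standing for `Pic(X_min)`, `Eff` the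
class of nonzero effective classes on `X_min`, and the exceptional curves
`E_j` corresponding to the standard generators `Pi.single j 1` of `ℤ^m`.
Effective irreducible summands on `X` are either pullbacks of nonzero
effective classes (with zero exceptional part) or one of the irreducible
exceptional curves `E_j`.  If `d_min` is the greatest number of nonzero
effective summands in decompositions of `Δ_min`, and
`Δ = f^*Δ_min + Σ_j (α_j − β_j) E_j` with all `c j := α_j − β_j ≥ 0`, then the
greatest number of nonzero effective irreducible summands in decompositions of
`Δ` equals `d_min + Σ_j (α_j − β_j)`. -/
theorem stmt_9 {A : Type*} [AddCommGroup A] (m : ℕ)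
    (Eff : A → Prop) (hEff0 : ¬ Eff 0)
    (Δmin : A) (c : Fin m → ℤ) (hc : ∀ j, 0 ≤ c j) (dmin : ℕ)
    (hmin : IsGreatest
      {h : ℕ | ∃ D : Fin h → A, (∀ i, Eff (D i)) ∧ ∑ i, D i = Δmin} dmin) :
    IsGreatest
      {h : ℕ | ∃ D : Fin h → A × (Fin m → ℤ),
        (∀ i, (Eff (D i).1 ∧ (D i).2 = 0) ∨
              ((D i).1 = 0 ∧ ∃ j : Fin m, (D i).2 = Pi.single j 1)) ∧
        ∑ i, D i = (Δmin, c)}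
      (dmin + (∑ j, c j).toNat) := by
  obtain ⟨⟨D0, hD0eff, hD0sum⟩, hub⟩ := hmin
  have hcast : ((∑ j, (c j).toNat : ℕ) : ℤ) = ∑ j, c j := by
    push_cast
    exact Finset.sum_congr rfl fun j _ => Int.toNat_of_nonneg (hc j)
  have hNsum : (∑ j, c j).toNat = ∑ j, (c j).toNat := by
    rw [← hcast]; exact Int.toNat_natCast _
  set N := (∑ j, c j).toNat with hN
  constructor
  · -- membership
    have hcard : Fintype.card (Σ j : Fin m, Fin (c j).toNat) = N := by
      simp [Fintype.card_sigma, hNsum]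
    let σ : (Σ j : Fin m, Fin (c j).toNat) ≃ Fin N := Fintype.equivFinOfCardEq hcard
    have hsingle : ∑ k : Fin N, (Pi.single ((σ.symm k).1) 1 : Fin m → ℤ) = c := by
      rw [Equiv.sum_comp σ.symm (fun s => (Pi.single s.1 1 : Fin m → ℤ))]
      rw [← Finset.univ_sigma_univ, Finset.sum_sigma]
      have : ∀ j : Fin m, ∑ _ : Fin (c j).toNat, (Pi.single j 1 : Fin m → ℤ)
          = Pi.single j (c j) := by
        intro j
        rw [Finset.sum_const, Finset.card_univ, Fintype.card_fin]
        ext j'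
        by_cases hjj : j' = j
        · subst hjj; simp [Int.toNat_of_nonneg (hc j')]
        · simp [Pi.single_apply, hjj]
      simp_rw [this]
      exact Finset.univ_sum_single c
    refine ⟨Fin.append (fun i => (D0 i, 0)) (fun k => (0, Pi.single (σ.symm k).1 1)), ?_, ?_⟩
    · intro i
      refine Fin.addCases (fun i => ?_) (fun k => ?_) i
      · rw [Fin.append_left]; exact Or.inl ⟨hD0eff i, rfl⟩
      · rw [Fin.append_right]; exact Or.inr ⟨rfl, ⟨_, rfl⟩⟩
    · rw [Fin.sum_univ_add]
      simp only [Fin.append_left, Fin.append_right]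
      rw [Prod.ext_iff]
      constructor
      · simp only [Prod.fst_sum, Prod.fst_add]
        simp [hD0sum]
      · simp only [Prod.snd_sum, Prod.snd_add]
        simp [hsingle]
  · -- upper bound
    rintro h ⟨D, hD, hsum⟩
    have hfst : ∑ i, (D i).1 = Δmin := by
      rw [← Prod.fst_sum, hsum]
    have hsnd : ∑ i, (D i).2 = c := by
      rw [← Prod.snd_sum, hsum]
    classical
    set S : Finset (Fin h) := Finset.univ.filter (fun i => (D i).2 = 0) with hS
    have hmemS : ∀ i ∈ S, Eff (D i).1 := by
      intro i hi
      rcases hD i with ⟨he, _⟩ | ⟨_, j, hj⟩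
      · exact he
      · exfalso
        have h2 : (D i).2 = 0 := (Finset.mem_filter.mp hi).2
        have := congrFun (hj ▸ h2) j
        simp at this
    have hcase2 : ∀ i ∉ S, (D i).1 = 0 ∧ ∃ j, (D i).2 = Pi.single j 1 := by
      intro i hi
      rcases hD i with ⟨_, h2⟩ | h2
      · exact absurd (Finset.mem_filter.mpr ⟨Finset.mem_univ i, h2⟩) hi
      · exact h2
    have h1 : ∑ i ∈ S, (D i).1 = Δmin := by
      rw [← hfst]
      symm
      rw [← Finset.sum_filter_add_sum_filter_not Finset.univ (fun i => (D i).2 = 0)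
        (fun i => (D i).1), ← hS]
      have : ∑ i ∈ Sᶜ, (D i).1 = 0 :=
        Finset.sum_eq_zero fun i hi => (hcase2 i (Finset.mem_compl.mp hi)).1
      rw [show Finset.univ.filter (fun i => ¬ (D i).2 = 0) = Sᶜ by
        rw [hS]; ext i; simp, this, add_zero]
    have hcardS : S.card ≤ dmin := by
      apply hub
      refine ⟨fun k => (D (S.equivFin.symm k) : A × (Fin m → ℤ)).1, ?_, ?_⟩
      · intro k; exact hmemS _ (S.equivFin.symm k).2
      · rw [Equiv.sum_comp S.equivFin.symm (fun x : {x // x ∈ S} => (D x.1).1)]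
        rw [← h1]
        exact Finset.sum_attach S fun i => (D i).1
    have hcardSc : Sᶜ.card = N := by
      have h2 : ∑ i : Fin h, ∑ j, (D i).2 j = ∑ j, c j := by
        rw [Finset.sum_comm, ← hsnd]
        exact Finset.sum_congr rfl fun j _ => (Finset.sum_apply j Finset.univ _).symm
      have hSzero : ∑ i ∈ S, ∑ j, (D i).2 j = 0 :=
        Finset.sum_eq_zero fun i hi => by
          have h0 : (D i).2 = 0 := (Finset.mem_filter.mp hi).2
          simp [h0]
      have hScone : ∑ i ∈ Sᶜ, ∑ j, (D i).2 j = Sᶜ.card := by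
        rw [Finset.sum_congr rfl (fun i hi => ?_), Finset.sum_const, nsmul_eq_mul, mul_one]
        obtain ⟨_, j, hj⟩ := hcase2 i (Finset.mem_compl.mp hi)
        rw [hj]
        simp [Pi.single_apply]
      have key : (Sᶜ.card : ℤ) = ∑ j, c j := by
        rw [← h2, ← Finset.sum_add_sum_compl S (fun i => ∑ j, (D i).2 j), hSzero, hScone,
          zero_add]
      rw [hN, ← key, Int.toNat_natCast]
    have hcards : S.card + Sᶜ.card = h := by
      rw [Finset.card_add_card_compl]
      simp
    omega
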